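/- Let σ' be the standard real Gaussian measure on ℝ^k ⊂ ℂ^k with density π^{-k/2} e^{-‖a‖²} dλ_k. Then for every ν ≥ 1 there exists Γ_ν independent of k such that for every unit vector u ∈ ℂ^k, ∫_{ℝ^k} |log |⟨a,u⟩||^ν dσ'(a) ≤ Γ_ν. -/

import Mathlib

/-!
`σ'` is the product of `N(0, 1/2)` laws, under which `a ↦ ∑ aᵢ wᵢ` has law `N(0, ‖w‖²/2)` for
every real `w` (compare characteristic functions). Write `u = x + i y`. Then
`|⟨a,u⟩|² = ⟨a,x⟩² + ⟨a,y⟩²` has mean `‖u‖²/2 = 1/2`, and `|⟨a,u⟩| ≥ |⟨a,w⟩|` where `w` is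
whichever of `x`, `y` has `‖w‖² ≥ 1/2`, so `E |⟨a,u⟩|^(-1/4) ≤ E |⟨a,w⟩|^(-1/4)` is bounded by
a negative moment of a Gaussian of variance at least `1/4`. Both bounds are dimension-free, and
`|log t|^ν ≤ C_ν (t² + t^(-1/4))` combines them.
-/

open MeasureTheory ProbabilityTheory Real
open scoped NNReal

lemma log_rpow_le_rpow {ν r y : ℝ} (hν : 0 < ν) (hr : 0 < r) (hy : 1 ≤ y) :
    log y ^ ν ≤ (ν / r) ^ ν * y ^ r := by
  have hy₀ : 0 < y := one_pos.trans_le hy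
  calc log y ^ ν ≤ (y ^ (r / ν) / (r / ν)) ^ ν :=
        rpow_le_rpow (log_nonneg hy) (log_le_rpow_div hy₀.le (by positivity)) hν.le
    _ = (ν / r) ^ ν * y ^ r := by
        rw [div_div_eq_mul_div, mul_div_assoc, mul_rpow (by positivity) (by positivity),
          ← rpow_mul hy₀.le, div_mul_cancel₀ _ hν.ne', mul_comm]

lemma abs_log_rpow_le {ν p q t : ℝ} (hν : 0 < ν) (hp : 0 < p) (hq : 0 < q) (ht : 0 < t) :
    |log t| ^ ν ≤ (ν / p) ^ ν * t ^ p + (ν / q) ^ ν * t ^ (-q) := by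
  have h₁ : 0 ≤ (ν / p) ^ ν * t ^ p := by positivity
  have h₂ : 0 ≤ (ν / q) ^ ν * t ^ (-q) := by positivity
  rcases le_total 1 t with h | h
  · rw [abs_of_nonneg (log_nonneg h)]
    linarith [log_rpow_le_rpow hν hp h]
  · have := log_rpow_le_rpow hν hq ((one_le_inv₀ ht).2 h)
    rw [inv_rpow ht.le, ← rpow_neg ht.le, log_inv] at this
    rw [abs_of_nonpos (log_nonpos ht.le h)]
    linarith

lemma integral_abs_log_rpow_le {Ω : Type*} [MeasurableSpace Ω] {P : Measure Ω} {Z ζ : Ω → ℝ}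
    {ν q : ℝ} (hν : 0 < ν) (hq : 0 < q) (hζZ : ∀ ω, |ζ ω| ≤ Z ω) (hζ : ∀ᵐ ω ∂P, ζ ω ≠ 0)
    (hZ : Integrable (fun ω => Z ω ^ 2) P) (hζq : Integrable (fun ω => |ζ ω| ^ (-q)) P) :
    ∫ ω, |log (Z ω)| ^ ν ∂P ≤
      (ν / 2) ^ ν * ∫ ω, Z ω ^ 2 ∂P + (ν / q) ^ ν * ∫ ω, |ζ ω| ^ (-q) ∂P := by
  rw [← integral_const_mul, ← integral_const_mul,
    ← integral_add (hZ.const_mul _) (hζq.const_mul _)]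
  refine integral_mono_of_nonneg (ae_of_all _ fun ω => by positivity)
    ((hZ.const_mul _).add (hζq.const_mul _)) ?_
  -- `0 ^ (-q) = 0` in Lean, so `Z ^ (-q) ≤ |ζ| ^ (-q)` is only available where `ζ ≠ 0`.
  filter_upwards [hζ] with ω hω
  have hζ_pos : 0 < |ζ ω| := abs_pos.2 hω
  calc |log (Z ω)| ^ ν ≤ (ν / 2) ^ ν * Z ω ^ (2 : ℝ) + (ν / q) ^ ν * Z ω ^ (-q) :=
        abs_log_rpow_le hν two_pos hq (hζ_pos.trans_le (hζZ ω))
    _ ≤ (ν / 2) ^ ν * Z ω ^ 2 + (ν / q) ^ ν * |ζ ω| ^ (-q) := by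
        rw [rpow_two]
        exact add_le_add le_rfl (mul_le_mul_of_nonneg_left
          (rpow_le_rpow_of_nonpos hζ_pos (hζZ ω) (neg_nonpos.2 hq.le)) (by positivity))

lemma integrable_abs_rpow_mul_exp_neg_mul_sq {b s : ℝ} (hb : 0 < b) (hs : -1 < s) :
    Integrable fun x : ℝ => |x| ^ s * exp (-b * x ^ 2) := by
  have h := integrable_rpow_mul_exp_neg_mul_sq hb hs
  refine (h.norm.add h.comp_neg.norm).mono' (by fun_prop) (ae_of_all _ fun x => ?_)
  simp only [Pi.add_apply, neg_sq,
    Real.norm_of_nonneg (by positivity : 0 ≤ |x| ^ s * exp (-b * x ^ 2))]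
  rcases le_total 0 x with hx | hx
  · rw [abs_of_nonneg hx]
    exact (le_norm_self _).trans (le_add_of_nonneg_right (norm_nonneg _))
  · rw [abs_of_nonpos hx]
    exact (le_norm_self _).trans (le_add_of_nonneg_left (norm_nonneg _))

lemma integrable_abs_rpow_gaussianReal {v : ℝ≥0} (hv : v ≠ 0) {s : ℝ} (hs : -1 < s) :
    Integrable (fun x => |x| ^ s) (gaussianReal 0 v) := by
  rw [gaussianReal_of_var_ne_zero _ hv, integrable_withDensity_iff_integrable_smul'
    (measurable_gaussianPDF _ _) (ae_of_all _ fun _ => gaussianPDF_lt_top)]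
  refine ((integrable_abs_rpow_mul_exp_neg_mul_sq (b := (2 * v)⁻¹) (by positivity) hs).const_mul
    (√(2 * π * v))⁻¹).congr (ae_of_all _ fun x => ?_)
  simp only [toReal_gaussianPDF, gaussianPDFReal, smul_eq_mul, sub_zero]
  rw [neg_div, div_eq_inv_mul, ← neg_mul]
  ring

lemma integral_sq_gaussianReal (v : ℝ≥0) : ∫ x, x ^ 2 ∂gaussianReal 0 v = v := by
  simpa [variance_eq_integral measurable_id'.aemeasurable] using
    variance_fun_id_gaussianReal (μ := 0) (v := v)

lemma integral_abs_rpow_gaussianReal (v : ℝ≥0) (s : ℝ) :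
    ∫ x, |x| ^ s ∂gaussianReal 0 v = (v : ℝ) ^ (s / 2) * ∫ x, |x| ^ s ∂gaussianReal 0 1 := by
  have hmap : (gaussianReal 0 1).map (√v * ·) = gaussianReal 0 v := by
    rw [gaussianReal_map_const_mul]
    congr 1
    · simp
    · ext; simp
  rw [← hmap, integral_map (by fun_prop) (measurable_abs.pow_const s).aestronglyMeasurable,
    ← integral_const_mul]
  congr 1 with x
  rw [abs_mul, abs_of_nonneg (sqrt_nonneg _), mul_rpow (sqrt_nonneg _) (abs_nonneg _),
    sqrt_eq_rpow, ← rpow_mul v.coe_nonneg]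
  ring_nf

section GaussianVector

variable {ι : Type*} [Fintype ι]

lemma pi_gaussianReal_eq_withDensity {v : ℝ≥0} (hv : v ≠ 0) :
    Measure.pi (fun _ : ι => gaussianReal 0 v) =
      volume.withDensity fun a => ENNReal.ofReal (∏ i, gaussianPDFReal 0 v (a i)) := by
  refine Measure.pi_eq fun s hs => ?_
  have hint : Integrable (fun a : ι → ℝ => ∏ i, gaussianPDFReal 0 v (a i)) :=
    Integrable.fintype_prod fun _ => integrable_gaussianPDFReal 0 v
  rw [withDensity_apply _ (MeasurableSet.univ_pi hs), ← ofReal_integral_eq_lintegral_ofReal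
    hint.integrableOn
    (ae_of_all _ fun a => Finset.prod_nonneg fun i _ => gaussianPDFReal_nonneg 0 v (a i)),
    volume_pi, Measure.restrict_pi_pi, integral_fintype_prod_eq_prod,
    ENNReal.ofReal_prod_of_nonneg fun i _ => ?_]
  · simp_rw [gaussianReal_apply_eq_integral 0 hv]
  · exact setIntegral_nonneg (hs i) fun x _ => gaussianPDFReal_nonneg 0 v x

lemma integral_pi_gaussianReal {v : ℝ≥0} (hv : v ≠ 0) (f : (ι → ℝ) → ℝ) :
    ∫ a, f a ∂Measure.pi (fun _ : ι => gaussianReal 0 v) =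
      ∫ a, f a * ∏ i, gaussianPDFReal 0 v (a i) := by
  rw [pi_gaussianReal_eq_withDensity hv, integral_withDensity_eq_integral_toReal_smul
    (by fun_prop) (ae_of_all _ fun _ => ENNReal.ofReal_lt_top)]
  congr 1 with a
  rw [ENNReal.toReal_ofReal (Finset.prod_nonneg fun i _ => gaussianPDFReal_nonneg 0 v (a i)),
    smul_eq_mul, mul_comm]

lemma prod_gaussianPDFReal_inv_two (a : ι → ℝ) :
    ∏ i, gaussianPDFReal 0 2⁻¹ (a i) =
      π ^ (-(Fintype.card ι : ℝ) / 2) * exp (-∑ i, a i ^ 2) := by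
  have hπ : (√(2 * π * (2⁻¹ : ℝ≥0)))⁻¹ = π ^ (-(1 / 2 : ℝ)) := by
    rw [show 2 * π * ((2⁻¹ : ℝ≥0) : ℝ) = π by simp; ring, sqrt_eq_rpow, rpow_neg pi_pos.le]
  simp only [gaussianPDFReal, Finset.prod_mul_distrib, Finset.prod_const, Finset.card_univ, hπ,
    ← rpow_natCast, ← rpow_mul pi_pos.le, ← exp_sum, ← Finset.sum_neg_distrib]
  congr 2
  · ring
  · exact Finset.sum_congr rfl fun i _ => by simp

lemma map_pi_gaussianReal_sum_mul (v : ℝ≥0) (w : ι → ℝ) :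
    (Measure.pi fun _ : ι => gaussianReal 0 v).map (fun a => ∑ i, a i * w i) =
      gaussianReal 0 ((∑ i, ‖w i‖₊ ^ 2) * v) := by
  refine Measure.ext_of_charFun (funext fun t => ?_)
  have hexp (a : ι → ℝ) : Complex.exp (t * ↑(∑ i, a i * w i) * Complex.I) =
      ∏ i, Complex.exp ((t * w i : ℝ) * a i * Complex.I) := by
    rw [← Complex.exp_sum]
    push_cast
    rw [Finset.mul_sum, Finset.sum_mul]
    exact congrArg Complex.exp (Finset.sum_congr rfl fun i _ => by ring)
  rw [charFun_apply_real, integral_map (by fun_prop : Measurable _).aemeasurable (by fun_prop)]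
  simp_rw [hexp]
  rw [integral_fintype_prod_eq_prod (fun i (x : ℝ) => Complex.exp ((t * w i : ℝ) * x * Complex.I))]
  simp_rw [← charFun_apply_real, charFun_gaussianReal, ← Complex.exp_sum]
  congr 1
  push_cast
  simp only [mul_zero, zero_mul, zero_sub, Finset.sum_neg_distrib, Finset.sum_div, Finset.sum_mul]
  refine congrArg _ (Finset.sum_congr rfl fun i _ => ?_)
  rw [Real.norm_eq_abs, ← Complex.ofReal_pow, sq_abs]
  push_cast
  ring

variable (v : ℝ≥0) (w : ι → ℝ)

lemma coe_sum_nnnorm_sq_mul : (((∑ i, ‖w i‖₊ ^ 2) * v : ℝ≥0) : ℝ) = (∑ i, w i ^ 2) * v := by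
  push_cast
  simp [sq_abs]

lemma integral_comp_sum_mul_pi_gaussianReal {g : ℝ → ℝ} (hg : Measurable g) :
    ∫ a, g (∑ i, a i * w i) ∂Measure.pi (fun _ : ι => gaussianReal 0 v) =
      ∫ x, g x ∂gaussianReal 0 ((∑ i, ‖w i‖₊ ^ 2) * v) := by
  rw [← map_pi_gaussianReal_sum_mul, integral_map (by fun_prop : Measurable _).aemeasurable
    hg.aestronglyMeasurable]

lemma integrable_comp_sum_mul_pi_gaussianReal_iff {g : ℝ → ℝ} (hg : Measurable g) :
    Integrable (fun a => g (∑ i, a i * w i)) (Measure.pi fun _ : ι => gaussianReal 0 v) ↔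
      Integrable g (gaussianReal 0 ((∑ i, ‖w i‖₊ ^ 2) * v)) := by
  rw [← map_pi_gaussianReal_sum_mul, integrable_map_measure hg.aestronglyMeasurable
    (by fun_prop : Measurable _).aemeasurable]
  rfl

lemma integral_sq_sum_mul_pi_gaussianReal :
    ∫ a, (∑ i, a i * w i) ^ 2 ∂Measure.pi (fun _ : ι => gaussianReal 0 v) =
      (∑ i, w i ^ 2) * v := by
  rw [integral_comp_sum_mul_pi_gaussianReal v w (g := (· ^ 2)) (by fun_prop),
    integral_sq_gaussianReal, coe_sum_nnnorm_sq_mul]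

lemma integrable_sq_sum_mul_pi_gaussianReal :
    Integrable (fun a => (∑ i, a i * w i) ^ 2) (Measure.pi fun _ : ι => gaussianReal 0 v) :=
  (integrable_comp_sum_mul_pi_gaussianReal_iff v w (g := (· ^ 2)) (by fun_prop)).2
    (memLp_id_gaussianReal 2).integrable_sq

lemma integral_abs_rpow_sum_mul_pi_gaussianReal (s : ℝ) :
    ∫ a, |∑ i, a i * w i| ^ s ∂Measure.pi (fun _ : ι => gaussianReal 0 v) =
      ((∑ i, w i ^ 2) * v) ^ (s / 2) * ∫ x, |x| ^ s ∂gaussianReal 0 1 := by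
  rw [integral_comp_sum_mul_pi_gaussianReal v w (g := (|·| ^ s)) (by fun_prop),
    integral_abs_rpow_gaussianReal, coe_sum_nnnorm_sq_mul]

variable {v w}

lemma sum_nnnorm_sq_mul_ne_zero (hv : v ≠ 0) (hw : w ≠ 0) : (∑ i, ‖w i‖₊ ^ 2) * v ≠ 0 := by
  obtain ⟨i, hi⟩ := Function.ne_iff.1 hw
  refine mul_ne_zero (ne_of_gt ?_) hv
  exact (pow_pos (nnnorm_pos.2 hi) 2).trans_le
    (Finset.single_le_sum (f := fun j => ‖w j‖₊ ^ 2) (fun j _ => zero_le) (Finset.mem_univ i))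

lemma integrable_abs_rpow_sum_mul_pi_gaussianReal (hv : v ≠ 0) (hw : w ≠ 0) {s : ℝ}
    (hs : -1 < s) :
    Integrable (fun a => |∑ i, a i * w i| ^ s) (Measure.pi fun _ : ι => gaussianReal 0 v) :=
  (integrable_comp_sum_mul_pi_gaussianReal_iff v w (g := (|·| ^ s)) (by fun_prop)).2
    (integrable_abs_rpow_gaussianReal (sum_nnnorm_sq_mul_ne_zero hv hw) hs)

lemma ae_sum_mul_ne_zero_pi_gaussianReal (hv : v ≠ 0) (hw : w ≠ 0) :
    ∀ᵐ a ∂Measure.pi (fun _ : ι => gaussianReal 0 v), ∑ i, a i * w i ≠ 0 := by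
  have := nullSingletonClass_gaussianReal (μ := 0) (sum_nnnorm_sq_mul_ne_zero hv hw)
  rw [← map_pi_gaussianReal_sum_mul] at this
  exact ae_of_ae_map (p := (· ≠ 0))
    (by fun_prop : Measurable fun a : ι → ℝ => ∑ i, a i * w i).aemeasurable (Measure.ae_ne _ 0)

end GaussianVector

section ComplexPairing

variable {ι : Type*} [Fintype ι]

lemma norm_sum_ofReal_mul_conj_sq (a : ι → ℝ) (u : ι → ℂ) :
    ‖∑ i, (a i : ℂ) * (starRingEnd ℂ) (u i)‖ ^ 2 =
      (∑ i, a i * (u i).re) ^ 2 + (∑ i, a i * (u i).im) ^ 2 := by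
  rw [Complex.sq_norm, Complex.normSq_apply, Complex.re_sum, Complex.im_sum]
  simp only [Complex.mul_re, Complex.mul_im, Complex.ofReal_re, Complex.ofReal_im,
    Complex.conj_re, Complex.conj_im, zero_mul, add_zero, mul_neg, neg_zero, sub_zero,
    Finset.sum_neg_distrib]
  ring

lemma sum_re_sq_add_sum_im_sq (u : ι → ℂ) :
    ∑ i, (u i).re ^ 2 + ∑ i, (u i).im ^ 2 = ∑ i, ‖u i‖ ^ 2 := by
  rw [← Finset.sum_add_distrib]
  refine Finset.sum_congr rfl fun i _ => ?_
  rw [Complex.sq_norm, Complex.normSq_apply]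
  ring

lemma exists_half_le_sum_sq_abs_le_norm (u : ι → ℂ) (hu : ∑ i, ‖u i‖ ^ 2 = 1) :
    ∃ w : ι → ℝ, 1 / 2 ≤ ∑ i, w i ^ 2 ∧
      ∀ a : ι → ℝ, |∑ i, a i * w i| ≤ ‖∑ i, (a i : ℂ) * (starRingEnd ℂ) (u i)‖ := by
  have hsum := sum_re_sq_add_sum_im_sq u
  rcases le_total (1 / 2) (∑ i, (u i).re ^ 2) with h | h
  · refine ⟨fun i => (u i).re, h, fun a => abs_le_of_sq_le_sq ?_ (norm_nonneg _)⟩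
    rw [norm_sum_ofReal_mul_conj_sq]
    exact le_add_of_nonneg_right (sq_nonneg _)
  · refine ⟨fun i => (u i).im, by linarith, fun a => abs_le_of_sq_le_sq ?_ (norm_nonneg _)⟩
    rw [norm_sum_ofReal_mul_conj_sq]
    exact le_add_of_nonneg_left (sq_nonneg _)

variable (v : ℝ≥0) (u : ι → ℂ)

lemma integrable_norm_sum_ofReal_mul_conj_sq_pi_gaussianReal :
    Integrable (fun a => ‖∑ i, (a i : ℂ) * (starRingEnd ℂ) (u i)‖ ^ 2)
      (Measure.pi fun _ : ι => gaussianReal 0 v) := by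
  simp_rw [norm_sum_ofReal_mul_conj_sq]
  exact (integrable_sq_sum_mul_pi_gaussianReal v _).add
    (integrable_sq_sum_mul_pi_gaussianReal v _)

lemma integral_norm_sum_ofReal_mul_conj_sq_pi_gaussianReal :
    ∫ a, ‖∑ i, (a i : ℂ) * (starRingEnd ℂ) (u i)‖ ^ 2
        ∂Measure.pi (fun _ : ι => gaussianReal 0 v) = (∑ i, ‖u i‖ ^ 2) * v := by
  simp_rw [norm_sum_ofReal_mul_conj_sq]
  rw [integral_add (integrable_sq_sum_mul_pi_gaussianReal v _)
    (integrable_sq_sum_mul_pi_gaussianReal v _), integral_sq_sum_mul_pi_gaussianReal,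
    integral_sq_sum_mul_pi_gaussianReal, ← add_mul, sum_re_sq_add_sum_im_sq]

end ComplexPairing

/-- Dimension-free log-moment bound for the real Gaussian: for every `ν ≥ 1` there is
`Γ_ν` such that for every `k` and every unit vector `u ∈ ℂ^k`,
`∫_{ℝ^k} |log |⟨a,u⟩||^ν dσ'_k(a) ≤ Γ_ν`, where `σ'_k` has density `π^{-k/2} e^{-‖a‖²}`. -/
theorem stmt11 (ν : ℝ) (hν : 1 ≤ ν) :
    ∃ Γ : ℝ, ∀ (k : ℕ) (u : Fin k → ℂ), (∑ j, ‖u j‖ ^ 2) = 1 →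
      ∫ a : Fin k → ℝ,
          |Real.log ‖∑ j, (a j : ℂ) * (starRingEnd ℂ) (u j)‖| ^ ν *
            (π ^ (-(k : ℝ) / 2) * Real.exp (-∑ j, (a j) ^ 2)) ≤ Γ := by
  have hν₀ : 0 < ν := by linarith
  have hv : (2⁻¹ : ℝ≥0) ≠ 0 := by norm_num
  set M := ∫ x, |x| ^ (-(4⁻¹ : ℝ)) ∂gaussianReal 0 1
  refine ⟨(ν / 2) ^ ν * 2⁻¹ + (ν / 4⁻¹) ^ ν * ((4⁻¹ : ℝ) ^ (-(4⁻¹ : ℝ) / 2) * M),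
    fun k u hu => ?_⟩
  have hdensity (a : Fin k → ℝ) :
      π ^ (-(k : ℝ) / 2) * exp (-∑ j, a j ^ 2) = ∏ j, gaussianPDFReal 0 2⁻¹ (a j) := by
    simp [prod_gaussianPDFReal_inv_two]
  simp_rw [hdensity, ← integral_pi_gaussianReal hv]
  obtain ⟨w, hw, hwZ⟩ := exists_half_le_sum_sq_abs_le_norm u hu
  have hw₀ : w ≠ 0 := by
    rintro rfl
    norm_num at hw
  refine (integral_abs_log_rpow_le hν₀ (q := 4⁻¹) (by norm_num) hwZ
    (ae_sum_mul_ne_zero_pi_gaussianReal hv hw₀)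
    (integrable_norm_sum_ofReal_mul_conj_sq_pi_gaussianReal _ u)
    (integrable_abs_rpow_sum_mul_pi_gaussianReal hv hw₀ (by norm_num))).trans ?_
  rw [integral_norm_sum_ofReal_mul_conj_sq_pi_gaussianReal, hu,
    integral_abs_rpow_sum_mul_pi_gaussianReal]
  have hM : 0 ≤ M := integral_nonneg fun x => by positivity
  have hvar : ((∑ j, w j ^ 2) * ((2⁻¹ : ℝ≥0) : ℝ)) ^ (-(4⁻¹ : ℝ) / 2) ≤
      (4⁻¹ : ℝ) ^ (-(4⁻¹ : ℝ) / 2) :=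
    rpow_le_rpow_of_nonpos (by norm_num) (by push_cast; linarith) (by norm_num)
  gcongr ?_ + _ * (?_ * _)
  norm_num
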